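/- arXiv:2502.12609 — 7 statements merged into one kernel-verified Lean document; each statement's English description precedes it below -/
import Mathlib

section
/- Let p be an odd positive integer and let v : ℝ² → ℝ be a polynomial of total degree at most p such that for every i ≠ j and every univariate polynomial q of degree at most p−1 one has ∫₀¹ v(γ_{ij}(t)) q(t) dt = 0. Then v vanishes at every point of each of the three closed edges of the triangle K, i.e., v(γ_{ij}(t)) = 0 for all i ≠ j and all t ∈ [0,1]. -/
/-!
Restricting `v` to an edge gives a univariate polynomial `f` of degree `≤ p` that is orthogonal
on `[0, 1]` to all polynomials of degree `< p`; reversing the edge replaces `f` by `f (1 - t)`.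
As `p` is odd, the leading terms of `f` and `f (1 - t)` cancel, so `f + f (1 - t)` has degree
`< p`, is orthogonal to itself, and vanishes: the values of `v` at the two ends of an edge are
opposite. Around the odd cycle of the three vertices this makes `v` vanish at the vertices. Then
`f (0) = 0` gives `f = t g` with `deg g < p`, and `∫ t g(t)² dt = ⟨f, g⟩ = 0` forces `g = 0`.
-/

open MeasureTheory Polynomial

/-- The edge parametrization `γ_{ij}(t) = A i + t • (A j - A i)`. -/
noncomputable def edgeParam (A : Fin 3 → (Fin 2 → ℝ)) (i j : Fin 3) (t : ℝ) :
    Fin 2 → ℝ :=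
  A i + t • (A j - A i)

namespace Polynomial

theorem eq_zero_of_intervalIntegral_eq_zero_of_nonneg {f : ℝ[X]} {a b : ℝ} (hab : a < b)
    (hf : ∀ t ∈ Set.Ioc a b, 0 ≤ f.eval t) (h : ∫ t in a..b, f.eval t = 0) : f = 0 := by
  have hae := (intervalIntegral.integral_eq_zero_iff_of_le_of_nonneg_ae hab.le
    ((ae_restrict_iff' measurableSet_Ioc).2 (ae_of_all _ hf))
    (f.continuous.intervalIntegrable a b)).1 h
  have hroot : Set.EqOn (fun t => f.eval t) 0 (Set.Ioc a b) :=
    Measure.eqOn_Ioc_of_ae_eq (μ := volume) hae f.continuous.continuousOn continuousOn_const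
  exact f.eq_zero_of_infinite_isRoot ((Set.Ioc_infinite hab).mono fun t ht => hroot ht)

section OneSubX

variable {R : Type*} [CommRing R]

theorem natDegree_one_sub_X [Nontrivial R] : (1 - X : R[X]).natDegree = 1 := by
  rw [← neg_sub, ← C_1, natDegree_neg, natDegree_X_sub_C]

theorem leadingCoeff_one_sub_X : (1 - X : R[X]).leadingCoeff = -1 := by
  rw [← neg_sub, ← C_1, leadingCoeff_neg, leadingCoeff_X_sub_C]

theorem natDegree_comp_one_sub_le [Nontrivial R] (f : R[X]) :
    (f.comp (1 - X)).natDegree ≤ f.natDegree :=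
  natDegree_comp_le.trans (by rw [natDegree_one_sub_X, mul_one])

theorem coeff_comp_one_sub [Nontrivial R] {f : R[X]} {n : ℕ} (hf : f.natDegree ≤ n) :
    (f.comp (1 - X)).coeff n = (-1) ^ n * f.coeff n := by
  rcases hf.lt_or_eq with hlt | rfl
  · rw [coeff_eq_zero_of_natDegree_lt hlt,
      coeff_eq_zero_of_natDegree_lt ((natDegree_comp_one_sub_le f).trans_lt hlt), mul_zero]
  · have hcoeff := coeff_comp_degree_mul_degree (p := f) (q := 1 - X)
      (by rw [natDegree_one_sub_X]; exact one_ne_zero)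
    rw [natDegree_one_sub_X, mul_one, leadingCoeff_one_sub_X] at hcoeff
    rw [hcoeff, coeff_natDegree, mul_comm]

theorem natDegree_add_comp_one_sub_le [Nontrivial R] {f : R[X]} {k : ℕ}
    (hf : f.natDegree ≤ 2 * k + 1) :
    (f + f.comp (1 - X)).natDegree ≤ 2 * k := by
  refine natDegree_le_pred
    (natDegree_add_le_of_degree_le hf ((natDegree_comp_one_sub_le f).trans hf)) ?_
  rw [coeff_add, coeff_comp_one_sub hf, (odd_two_mul_add_one k).neg_one_pow, neg_one_mul,
    add_neg_cancel]

end OneSubX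

def OrthogonalToDegreeLE (f : ℝ[X]) (n : ℕ) : Prop :=
  ∀ q : ℝ[X], q.natDegree ≤ n → ∫ t in (0 : ℝ)..1, f.eval t * q.eval t = 0

namespace OrthogonalToDegreeLE

variable {f g : ℝ[X]} {n : ℕ}

theorem add (hf : OrthogonalToDegreeLE f n) (hg : OrthogonalToDegreeLE g n) :
    OrthogonalToDegreeLE (f + g) n := by
  intro q hq
  simp only [eval_add, add_mul]
  rw [intervalIntegral.integral_add (Continuous.intervalIntegrable (by fun_prop) _ _)
    (Continuous.intervalIntegrable (by fun_prop) _ _), hf q hq, hg q hq, add_zero]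

theorem comp_one_sub (hf : OrthogonalToDegreeLE f n) :
    OrthogonalToDegreeLE (f.comp (1 - X)) n := by
  intro q hq
  have hreflect := intervalIntegral.integral_comp_sub_left
    (fun s => f.eval s * (q.comp (1 - X)).eval s) (1 : ℝ) (a := 0) (b := 1)
  simp only [eval_comp, eval_sub, eval_one, eval_X, sub_sub_cancel, sub_self, sub_zero]
    at hreflect ⊢
  rw [hreflect]
  simpa only [eval_comp, eval_sub, eval_one, eval_X] using
    hf _ ((natDegree_comp_one_sub_le q).trans hq)

theorem eq_zero_of_natDegree_le (hf : OrthogonalToDegreeLE f n) (hdeg : f.natDegree ≤ n) :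
    f = 0 :=
  mul_self_eq_zero.1 <| eq_zero_of_intervalIntegral_eq_zero_of_nonneg zero_lt_one
    (fun t _ => by simpa only [eval_mul] using mul_self_nonneg (f.eval t))
    (by simpa only [eval_mul] using hf f hdeg)

theorem eq_zero_of_eval_zero (hf : OrthogonalToDegreeLE f n) (hdeg : f.natDegree ≤ n + 1)
    (h0 : f.eval 0 = 0) : f = 0 := by
  obtain ⟨g, rfl⟩ : X ∣ f := X_dvd_iff.2 (by rwa [coeff_zero_eq_eval_zero])
  rcases eq_or_ne g 0 with rfl | hg
  · rw [mul_zero]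
  rw [natDegree_X_mul hg, add_le_add_iff_right] at hdeg
  have hXgg : X * (g * g) = 0 := eq_zero_of_intervalIntegral_eq_zero_of_nonneg zero_lt_one
    (fun t ht => by simpa only [eval_mul, eval_X] using mul_nonneg ht.1.le (mul_self_nonneg _))
    (by simpa only [eval_mul, eval_X, mul_assoc] using hf g hdeg)
  simp [X_ne_zero, hg] at hXgg

theorem add_comp_one_sub_eq_zero {k : ℕ} (hf : OrthogonalToDegreeLE f (2 * k))
    (hdeg : f.natDegree ≤ 2 * k + 1) : f + f.comp (1 - X) = 0 :=
  (hf.add hf.comp_one_sub).eq_zero_of_natDegree_le (natDegree_add_comp_one_sub_le hdeg)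

theorem eval_zero_add_eval_one {k : ℕ} (hf : OrthogonalToDegreeLE f (2 * k))
    (hdeg : f.natDegree ≤ 2 * k + 1) : f.eval 0 + f.eval 1 = 0 := by
  simpa using congrArg (eval 0) (hf.add_comp_one_sub_eq_zero hdeg)

end OrthogonalToDegreeLE

end Polynomial

namespace MvPolynomial

variable {σ R : Type*} [CommRing R]

noncomputable def lineRestrict (v : MvPolynomial σ R) (x d : σ → R) : R[X] :=
  aeval (fun k => Polynomial.C (d k) * Polynomial.X + Polynomial.C (x k)) v

theorem eval_lineRestrict (v : MvPolynomial σ R) (x d : σ → R) (t : R) :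
    (v.lineRestrict x d).eval t = eval (x + t • d) v := by
  rw [lineRestrict, aeval_def, ← Polynomial.coe_evalRingHom, eval₂_comp_left]
  congr 1
  · ext; simp
  · ext k
    simp only [Function.comp_apply, Polynomial.coe_evalRingHom, Polynomial.eval_add,
      Polynomial.eval_mul, Polynomial.eval_C, Polynomial.eval_X, Pi.add_apply, Pi.smul_apply,
      smul_eq_mul]
    ring

theorem natDegree_lineRestrict_le (v : MvPolynomial σ R) (x d : σ → R) :
    (v.lineRestrict x d).natDegree ≤ v.totalDegree := by
  rw [lineRestrict, aeval_def, eval₂_eq]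
  refine natDegree_sum_le_of_forall_le _ _ fun m hm => ?_
  refine (natDegree_C_mul_le _ _).trans <| (natDegree_prod_le _ _).trans ?_
  refine (Finset.sum_le_sum fun k _ => natDegree_pow_le_of_le (m k) natDegree_linear_le).trans ?_
  simpa [Finsupp.sum] using le_totalDegree hm

end MvPolynomial

theorem eq_zero_of_forall_ne_add_eq_zero_fin_three {K : Type*} [Field K] [CharZero K]
    {a : Fin 3 → K} (h : ∀ i j, i ≠ j → a i + a j = 0) (i : Fin 3) : a i = 0 := by
  have h01 := h 0 1 (by decide)
  have h02 := h 0 2 (by decide)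
  have h12 := h 1 2 (by decide)
  match i with
  | 0 => linear_combination (h01 + h02 - h12) / 2
  | 1 => linear_combination (h01 - h02 + h12) / 2
  | 2 => linear_combination (h02 + h12 - h01) / 2

theorem CR_odd_vanishes_on_edges_general (p : ℕ) (hp_odd : Odd p)
    (A : Fin 3 → (Fin 2 → ℝ))
    (v : MvPolynomial (Fin 2) ℝ) (hv : v.totalDegree ≤ p)
    (hedge : ∀ i j : Fin 3, i ≠ j → ∀ q : Polynomial ℝ, q.natDegree ≤ p - 1 →
      ∫ t in (0:ℝ)..1,
        MvPolynomial.eval (edgeParam A i j t) v * q.eval t = 0) :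
    ∀ i j : Fin 3, i ≠ j → ∀ t ∈ Set.Icc (0:ℝ) 1,
      MvPolynomial.eval (edgeParam A i j t) v = 0 := by
  obtain ⟨k, rfl⟩ := hp_odd
  set f : Fin 3 → Fin 3 → ℝ[X] := fun i j => v.lineRestrict (A i) (A j - A i)
  have hf_eval (i j : Fin 3) (t : ℝ) :
      (f i j).eval t = MvPolynomial.eval (edgeParam A i j t) v :=
    MvPolynomial.eval_lineRestrict _ _ _ _
  have hf_deg (i j : Fin 3) : (f i j).natDegree ≤ 2 * k + 1 :=
    (MvPolynomial.natDegree_lineRestrict_le _ _ _).trans hv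
  have hf_orth (i j : Fin 3) (hij : i ≠ j) : (f i j).OrthogonalToDegreeLE (2 * k) :=
    fun q hq => by simpa only [hf_eval] using hedge i j hij q (by omega)
  have hvertex : ∀ i, MvPolynomial.eval (A i) v = 0 :=
    eq_zero_of_forall_ne_add_eq_zero_fin_three fun i j hij => by
      simpa [hf_eval, edgeParam] using (hf_orth i j hij).eval_zero_add_eval_one (hf_deg i j)
  intro i j hij t _
  rw [← hf_eval, (hf_orth i j hij).eq_zero_of_eval_zero (hf_deg i j)
    (by simp [hf_eval, edgeParam, hvertex]), eval_zero]

/-- If `p` is odd and the edge moments of a bivariate polynomial of total degree at most `p`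
against all univariate polynomials of degree at most `p − 1` vanish, then the polynomial
vanishes on every closed edge of the triangle. -/
theorem CR_odd_vanishes_on_edges (p : ℕ) (hp_pos : 0 < p) (hp_odd : Odd p)
    (A : Fin 3 → (Fin 2 → ℝ)) (hA : AffineIndependent ℝ A)
    (v : MvPolynomial (Fin 2) ℝ) (hv : v.totalDegree ≤ p)
    (hedge : ∀ i j : Fin 3, i ≠ j → ∀ q : Polynomial ℝ, q.natDegree ≤ p - 1 →
      ∫ t in (0:ℝ)..1,
        MvPolynomial.eval (edgeParam A i j t) v * q.eval t = 0) :
    ∀ i j : Fin 3, i ≠ j → ∀ t ∈ Set.Icc (0:ℝ) 1,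
      MvPolynomial.eval (edgeParam A i j t) v = 0 :=
  CR_odd_vanishes_on_edges_general p hp_odd A v hv hedge
end

section
/- Let p be an even positive integer and let v : ℝ² → ℝ be a polynomial of total degree at most p such that for every i ≠ j and every index k ∈ {0, 1, …, p−2} ∪ {p} one has ∫₀¹ v(γ_{ij}(t)) L_k(2t−1) dt = 0. Then v vanishes at every point of each of the three closed edges of the triangle K, i.e., v(γ_{ij}(t)) = 0 for all i ≠ j and all t ∈ [0,1]. -/
open MeasureTheory Polynomial

/-- The Legendre polynomial of degree `k`, via Rodrigues' formula
`L_k(x) = (1/(2^k k!)) (d/dx)^k [(x² − 1)^k]`. -/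
noncomputable def legendre (k : ℕ) : Polynomial ℝ :=
  ((2 ^ k * k.factorial : ℝ)⁻¹) •
    ((fun q : Polynomial ℝ => Polynomial.derivative q)^[k] ((Polynomial.X ^ 2 - 1) ^ k))

/-!
On an edge, `v` restricts to a polynomial `q` of degree at most `p` on `[0, 1]`, and after the
substitution `x = 2t - 1` the hypotheses say that `q` is `L²(0, 1)`-orthogonal to the shifted
Legendre polynomials `P_k` for all `k ≤ p` except `k = p - 1`. Since `P_0, …, P_p` is an
orthogonal basis of the polynomials of degree at most `p`, this leaves `q = c P_{p-1}`. As `p - 1`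
is odd, `P_{p-1}` takes opposite values at the two ends of `[0, 1]`, so `v(A_i) = -v(A_j)` for any
two vertices; going around the triangle gives `v(A_i) = 0`, hence `c = 0`.
-/

open scoped Nat

lemma isRoot_iterate_derivative_of_X_sub_C_pow_dvd {R : Type*} [CommRing R] {p : R[X]} {a : R}
    {n j : ℕ} (hj : j < n) (h : (X - C a) ^ n ∣ p) : (derivative^[j] p).IsRoot a :=
  dvd_iff_isRoot.mp ((dvd_pow_self _ (Nat.sub_ne_zero_of_lt hj)).trans
    (pow_sub_dvd_iterate_derivative_of_pow_dvd j h))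

lemma iterate_derivative_comp_C_mul_X_sub_C {R : Type*} [CommRing R] (p : R[X]) (a b : R)
    (k : ℕ) :
    derivative^[k] (p.comp (C a * X - C b)) =
      C a ^ k * (derivative^[k] p).comp (C a * X - C b) := by
  induction k generalizing p with
  | zero => simp
  | succ k ih =>
    rw [Function.iterate_succ_apply, derivative_comp, derivative_sub, derivative_C_mul_X,
      derivative_C, sub_zero, iterate_derivative_C_mul, ih, Function.iterate_succ_apply, pow_succ',
      mul_assoc]

lemma exists_eq_smul_add_of_degree_le {K : Type*} [Field K] {f g : K[X]} {n : ℕ}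
    (hg : g.degree = n) (hf : f.degree ≤ n) :
    ∃ (a : K) (s : K[X]), f = a • g + s ∧ s.degree < n := by
  have hgn : g.natDegree = n := natDegree_eq_of_degree_eq_some hg
  have hg0 : g.leadingCoeff ≠ 0 :=
    leadingCoeff_ne_zero.mpr (ne_zero_of_degree_gt (n := ⊥) (by simp [hg]))
  refine ⟨f.coeff n / g.leadingCoeff, f - (f.coeff n / g.leadingCoeff) • g, by abel, ?_⟩
  rw [degree_lt_iff_coeff_zero]
  intro m hm
  rcases hm.eq_or_lt with rfl | hm
  · rw [coeff_sub, coeff_smul, ← hgn, smul_eq_mul, coeff_natDegree, div_mul_cancel₀ _ hg0, hgn,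
      sub_self]
  · rw [coeff_sub, coeff_smul, coeff_eq_zero_of_degree_lt (hf.trans_lt (by exact_mod_cast hm)),
      coeff_eq_zero_of_degree_lt (hg.trans_lt (by exact_mod_cast hm)), smul_zero, sub_zero]

noncomputable def polyIntegral (a b : ℝ) : ℝ[X] →ₗ[ℝ] ℝ where
  toFun f := ∫ t in a..b, f.eval t
  map_add' f g := by
    simp only [eval_add]
    exact intervalIntegral.integral_add (f.continuous.intervalIntegrable a b)
      (g.continuous.intervalIntegrable a b)
  map_smul' c f := by
    simp only [eval_smul, smul_eq_mul, RingHom.id_apply]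
    exact intervalIntegral.integral_const_mul c _

section
variable {a b : ℝ}

@[simp] lemma polyIntegral_apply (f : ℝ[X]) : polyIntegral a b f = ∫ t in a..b, f.eval t := rfl

lemma polyIntegral_derivative (f : ℝ[X]) :
    polyIntegral a b (derivative f) = f.eval b - f.eval a :=
  intervalIntegral.integral_deriv_eq_sub' _ (funext fun _ => f.deriv)
    (fun _ _ => f.differentiableAt) (derivative f).continuous.continuousOn

lemma polyIntegral_derivative_mul {f g : ℝ[X]} (hfa : f.IsRoot a) (hfb : f.IsRoot b) :
    polyIntegral a b (derivative f * g) = -polyIntegral a b (f * derivative g) := by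
  have h := polyIntegral_derivative (a := a) (b := b) (f * g)
  rw [derivative_mul, map_add] at h
  simp only [eval_mul, hfa.eq_zero, hfb.eq_zero, zero_mul, sub_zero] at h
  linarith

lemma polyIntegral_iterate_derivative_mul_eq_zero {n : ℕ} {w r : ℝ[X]}
    (hw : ∀ j < n, (derivative^[j] w).IsRoot a ∧ (derivative^[j] w).IsRoot b)
    (hr : derivative^[n] r = 0) : polyIntegral a b (derivative^[n] w * r) = 0 := by
  induction n generalizing r with
  | zero => simp_all
  | succ n ih =>
    obtain ⟨hwa, hwb⟩ := hw n n.lt_succ_self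
    rw [Function.iterate_succ_apply', polyIntegral_derivative_mul hwa hwb,
      ih (fun j hj => hw j (by omega)) (by rwa [← Function.iterate_succ_apply]), neg_zero]

lemma polyIntegral_mul_self_pos (hab : a < b) {f : ℝ[X]} (hf : f ≠ 0) :
    0 < polyIntegral a b (f * f) := by
  obtain ⟨c, hc, hroot⟩ := (Set.Icc_infinite hab).exists_notMem_finset f.roots.toFinset
  refine intervalIntegral.integral_pos hab (f * f).continuous.continuousOn
    (fun x _ => by simpa using mul_self_nonneg (f.eval x)) ⟨c, hc, ?_⟩
  simpa [mul_self_pos, hf] using hroot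
end

/-- Mathlib's `shiftedLegendre n` is `L_n(1 - 2x)`: it equals `1` at `0` and differs from
`L_n(2x - 1)` by the sign `(-1)ⁿ` (see `legendre_comp_two_mul_X_sub_one`). -/
noncomputable def realShiftedLegendre (n : ℕ) : ℝ[X] :=
  (shiftedLegendre n).map (algebraMap ℤ ℝ)

lemma degree_realShiftedLegendre (n : ℕ) : (realShiftedLegendre n).degree = n := by
  rw [realShiftedLegendre, degree_map_eq_of_injective (RingHom.injective_int _),
    degree_shiftedLegendre]

lemma realShiftedLegendre_ne_zero (n : ℕ) : realShiftedLegendre n ≠ 0 :=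
  ne_zero_of_degree_gt (n := ⊥) (by simp [degree_realShiftedLegendre])

lemma eval_zero_realShiftedLegendre (n : ℕ) : (realShiftedLegendre n).eval 0 = 1 := by
  simp [realShiftedLegendre, ← coeff_zero_eq_eval_zero, coeff_shiftedLegendre]

lemma eval_one_realShiftedLegendre (n : ℕ) : (realShiftedLegendre n).eval 1 = (-1) ^ n := by
  rw [realShiftedLegendre, eval_map_algebraMap, shiftedLegendre_eval_symm, sub_self,
    ← eval_map_algebraMap, ← realShiftedLegendre, eval_zero_realShiftedLegendre, mul_one]

lemma factorial_mul_realShiftedLegendre (n : ℕ) :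
    (n ! : ℝ[X]) * realShiftedLegendre n = derivative^[n] (X ^ n * (1 - X) ^ n) := by
  have := congrArg (map (algebraMap ℤ ℝ)) (factorial_mul_shiftedLegendre_eq n)
  simpa [realShiftedLegendre, ← iterate_derivative_map] using this

lemma polyIntegral_mul_realShiftedLegendre_of_degree_lt {r : ℝ[X]} {n : ℕ}
    (hr : r.degree < n) :
    polyIntegral 0 1 (r * realShiftedLegendre n) = 0 := by
  have hrod : r * realShiftedLegendre n =
      (n ! : ℝ)⁻¹ • (derivative^[n] (X ^ n * (1 - X) ^ n) * r) := by
    rw [← factorial_mul_realShiftedLegendre, ← C_eq_natCast, smul_eq_C_mul, ← mul_assoc,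
      ← mul_assoc, ← C_mul, inv_mul_cancel₀ (by positivity), C_1, one_mul, mul_comm]
  have hdvd0 : (X - C 0) ^ n ∣ (X ^ n * (1 - X) ^ n : ℝ[X]) := by simp
  have hdvd1 : (X - C 1) ^ n ∣ (X ^ n * (1 - X) ^ n : ℝ[X]) := by
    have : (1 - X : ℝ[X]) ^ n = (-1) ^ n * (X - C 1) ^ n := by
      rw [← mul_pow]; congr 1; simp
    rw [this]
    exact (dvd_mul_left _ _).mul_left _
  rw [hrod, map_smul, polyIntegral_iterate_derivative_mul_eq_zero
    (fun j hj => ⟨isRoot_iterate_derivative_of_X_sub_C_pow_dvd hj hdvd0,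
      isRoot_iterate_derivative_of_X_sub_C_pow_dvd hj hdvd1⟩)
    (iterate_derivative_eq_zero_of_degree_lt hr), smul_zero]

lemma legendre_comp_two_mul_X_sub_one (k : ℕ) :
    (legendre k).comp (C 2 * X - C 1) = (-1) ^ k * realShiftedLegendre k := by
  have hsq : ((C 2 * X - C 1) ^ 2 - 1 : ℝ[X]) = C (-4) * (X * (1 - X)) := by
    simp only [map_neg, map_ofNat, map_one]; ring
  have hrod := iterate_derivative_comp_C_mul_X_sub_C ((X ^ 2 - 1 : ℝ[X]) ^ k) 2 1 k
  rw [pow_comp, sub_comp, pow_comp, X_comp, one_comp, hsq, mul_pow, ← C_pow, mul_pow,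
    iterate_derivative_C_mul, ← factorial_mul_realShiftedLegendre] at hrod
  have hc : (C ((4 : ℝ) ^ k * k !) : ℝ[X]) ≠ 0 := by simp; positivity
  refine mul_left_cancel₀ hc ?_
  rw [legendre, smul_comp, smul_eq_C_mul]
  have hscal : (C (4 ^ k * k ! : ℝ) * C (2 ^ k * k ! : ℝ)⁻¹ : ℝ[X]) = C 2 ^ k := by
    rw [← C_mul, ← C_pow, show (4 : ℝ) ^ k = 2 ^ k * 2 ^ k by rw [← mul_pow]; norm_num]
    field_simp
  rw [← mul_assoc, hscal]
  refine hrod.symm.trans ?_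
  rw [show (-4 : ℝ) ^ k = (-1) ^ k * 4 ^ k by rw [← mul_pow]; norm_num]
  simp only [map_mul, map_pow, map_neg, map_one, map_natCast]
  ring

lemma eval_legendre_two_mul_sub_one (k : ℕ) (t : ℝ) :
    (legendre k).eval (2 * t - 1) = (-1) ^ k * (realShiftedLegendre k).eval t := by
  simpa using congrArg (eval t) (legendre_comp_two_mul_X_sub_one k)

lemma polyIntegral_mul_eq_zero_of_degree_lt {q : ℝ[X]} {m : ℕ}
    (hq : ∀ k < m, polyIntegral 0 1 (q * realShiftedLegendre k) = 0) {f : ℝ[X]}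
    (hf : f.degree < m) : polyIntegral 0 1 (q * f) = 0 := by
  induction m generalizing f with
  | zero => simp_all
  | succ m ih =>
    obtain ⟨a, s, rfl, hs⟩ := exists_eq_smul_add_of_degree_le (degree_realShiftedLegendre m)
      (show f.degree ≤ m from Order.le_of_lt_succ hf)
    rw [mul_add, mul_smul_comm, map_add, map_smul, hq m m.lt_succ_self,
      ih (fun k hk => hq k (by omega)) hs, smul_zero, add_zero]

lemma exists_eq_smul_realShiftedLegendre_of_orthogonal {q : ℝ[X]} {n : ℕ}
    (hq : q.degree ≤ ↑(n + 2))
    (hlow : ∀ k ≤ n, polyIntegral 0 1 (q * realShiftedLegendre k) = 0)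
    (htop : polyIntegral 0 1 (q * realShiftedLegendre (n + 2)) = 0) :
    ∃ c : ℝ, q = c • realShiftedLegendre (n + 1) := by
  obtain ⟨a, r, rfl, hr⟩ := exists_eq_smul_add_of_degree_le (degree_realShiftedLegendre _) hq
  obtain ⟨b, s, rfl, hs⟩ := exists_eq_smul_add_of_degree_le (degree_realShiftedLegendre _)
    (show r.degree ≤ ↑(n + 1) from Order.le_of_lt_succ hr)
  have hs_lt : s.degree < ↑(n + 2) := hs.trans (by exact_mod_cast (n + 1).lt_succ_self)
  have hP_lt : (realShiftedLegendre (n + 1)).degree < ↑(n + 2) := by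
    rw [degree_realShiftedLegendre]; exact_mod_cast (n + 1).lt_succ_self
  have ha : a = 0 := by
    rw [add_mul, add_mul, smul_mul_assoc, smul_mul_assoc, map_add, map_add, map_smul, map_smul,
      polyIntegral_mul_realShiftedLegendre_of_degree_lt hP_lt,
      polyIntegral_mul_realShiftedLegendre_of_degree_lt hs_lt, smul_zero, add_zero, add_zero,
      smul_eq_mul] at htop
    exact (mul_eq_zero.mp htop).resolve_right
      (polyIntegral_mul_self_pos zero_lt_one (realShiftedLegendre_ne_zero (n + 2))).ne'
  have hs0 : s = 0 := by
    by_contra hs0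
    have hqs := polyIntegral_mul_eq_zero_of_degree_lt (fun k hk => hlow k (by omega)) hs
    rw [ha, zero_smul, zero_add, add_mul, smul_mul_assoc, map_add, map_smul,
      mul_comm (realShiftedLegendre _), polyIntegral_mul_realShiftedLegendre_of_degree_lt hs,
      smul_zero, zero_add] at hqs
    exact (polyIntegral_mul_self_pos zero_lt_one hs0).ne' hqs
  exact ⟨b, by rw [ha, hs0, zero_smul, zero_add, add_zero]⟩

noncomputable def lineRestrict {σ : Type*} (x y : σ → ℝ) (v : MvPolynomial σ ℝ) : ℝ[X] :=
  MvPolynomial.aeval (fun m => C (y m) * X + C (x m)) v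

lemma eval_lineRestrict {σ : Type*} (x y : σ → ℝ) (v : MvPolynomial σ ℝ) (t : ℝ) :
    (lineRestrict x y v).eval t = MvPolynomial.eval (x + t • y) v := by
  rw [lineRestrict, ← coe_evalRingHom, MvPolynomial.aeval_def, MvPolynomial.eval₂_comp_left]
  congr 1
  · ext; simp
  · ext m
    simp only [coe_evalRingHom, Function.comp_apply, eval_add, eval_mul, eval_C, eval_X,
      Pi.add_apply, Pi.smul_apply, smul_eq_mul]
    ring

lemma natDegree_lineRestrict_le {σ : Type*} (x y : σ → ℝ) (v : MvPolynomial σ ℝ) :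
    (lineRestrict x y v).natDegree ≤ v.totalDegree :=
  (MvPolynomial.aeval_natDegree_le v le_rfl _ fun _ => natDegree_linear_le).trans_eq (mul_one _)

lemma exists_eval_line_eq_mul_realShiftedLegendre {σ : Type*} {n : ℕ} (x y : σ → ℝ)
    {v : MvPolynomial σ ℝ} (hv : v.totalDegree ≤ n + 2)
    (hmom : ∀ k : ℕ, (k ≤ n ∨ k = n + 2) →
      ∫ t in (0:ℝ)..1, MvPolynomial.eval (x + t • y) v * (legendre k).eval (2 * t - 1) = 0) :
    ∃ c : ℝ, ∀ t,
      MvPolynomial.eval (x + t • y) v = c * (realShiftedLegendre (n + 1)).eval t := by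
  have hq : ∀ k : ℕ, (k ≤ n ∨ k = n + 2) →
      polyIntegral 0 1 (lineRestrict x y v * realShiftedLegendre k) = 0 := by
    intro k hk
    have h := hmom k hk
    simp only [eval_legendre_two_mul_sub_one, mul_left_comm _ ((-1 : ℝ) ^ k),
      intervalIntegral.integral_const_mul, ← eval_lineRestrict] at h
    simpa using h
  obtain ⟨c, hc⟩ := exists_eq_smul_realShiftedLegendre_of_orthogonal
    (degree_le_of_natDegree_le ((natDegree_lineRestrict_le x y v).trans hv))
    (fun k hk => hq k (Or.inl hk)) (hq (n + 2) (Or.inr rfl))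
  exact ⟨c, fun t => by rw [← eval_lineRestrict, hc, eval_smul, smul_eq_mul]⟩

lemma eq_zero_of_forall_ne_eq_neg {f : Fin 3 → ℝ} (h : ∀ i j, i ≠ j → f i = -f j)
    (i : Fin 3) : f i = 0 := by
  have h01 := h 0 1 (by decide)
  have h02 := h 0 2 (by decide)
  have h12 := h 1 2 (by decide)
  fin_cases i <;> simp only [Fin.isValue, Fin.zero_eta, Fin.mk_one, Fin.reduceFinMk] <;>
    linarith

theorem CR_even_vanishes_on_edges_general (p : ℕ) (hp_pos : 0 < p) (hp_even : Even p)
    (A : Fin 3 → (Fin 2 → ℝ))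
    (v : MvPolynomial (Fin 2) ℝ) (hv : v.totalDegree ≤ p)
    (hedge : ∀ i j : Fin 3, i ≠ j → ∀ k : ℕ, (k ≤ p - 2 ∨ k = p) →
      ∫ t in (0:ℝ)..1,
        MvPolynomial.eval (edgeParam A i j t) v * (legendre k).eval (2 * t - 1) = 0) :
    ∀ i j : Fin 3, i ≠ j → ∀ t ∈ Set.Icc (0:ℝ) 1,
      MvPolynomial.eval (edgeParam A i j t) v = 0 := by
  obtain ⟨n, rfl⟩ : ∃ n, p = n + 2 := ⟨p - 2, by obtain ⟨r, hr⟩ := hp_even; omega⟩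
  have hsign : (-1 : ℝ) ^ (n + 1) = -1 := by
    rw [pow_succ, (Nat.even_add.mp hp_even).mpr even_two |>.neg_one_pow, one_mul]
  have hrestrict : ∀ i j, i ≠ j → ∃ c : ℝ, ∀ t,
      MvPolynomial.eval (edgeParam A i j t) v = c * (realShiftedLegendre (n + 1)).eval t :=
    fun i j hij => exists_eval_line_eq_mul_realShiftedLegendre (A i) (A j - A i) hv
      fun k hk => hedge i j hij k (by simpa using hk)
  have hvertex : ∀ i, MvPolynomial.eval (A i) v = 0 := by
    refine eq_zero_of_forall_ne_eq_neg fun i j hij => ?_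
    obtain ⟨c, hc⟩ := hrestrict i j hij
    have h0 := hc 0
    have h1 := hc 1
    simp only [edgeParam, zero_smul, add_zero, one_smul, add_sub_cancel,
      eval_zero_realShiftedLegendre, eval_one_realShiftedLegendre, hsign] at h0 h1
    rw [h0, h1]
    ring
  intro i j hij t _
  obtain ⟨c, hc⟩ := hrestrict i j hij
  have hc0 : c = 0 := by simpa [edgeParam, eval_zero_realShiftedLegendre, hvertex] using (hc 0).symm
  rw [hc t, hc0, zero_mul]

/-- If `p` is even and the edge moments of a bivariate polynomial of total degree at most `p`
against the Legendre polynomials `L_k`, `k ∈ {0,…,p−2} ∪ {p}`, vanish, then the polynomial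
vanishes on every closed edge of the triangle. -/
theorem CR_even_vanishes_on_edges (p : ℕ) (hp_pos : 0 < p) (hp_even : Even p)
    (A : Fin 3 → (Fin 2 → ℝ)) (hA : AffineIndependent ℝ A)
    (v : MvPolynomial (Fin 2) ℝ) (hv : v.totalDegree ≤ p)
    (hedge : ∀ i j : Fin 3, i ≠ j → ∀ k : ℕ, (k ≤ p - 2 ∨ k = p) →
      ∫ t in (0:ℝ)..1,
        MvPolynomial.eval (edgeParam A i j t) v * (legendre k).eval (2 * t - 1) = 0) :
    ∀ i j : Fin 3, i ≠ j → ∀ t ∈ Set.Icc (0:ℝ) 1,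
      MvPolynomial.eval (edgeParam A i j t) v = 0 :=
  CR_even_vanishes_on_edges_general p hp_pos hp_even A v hv hedge
end

section
/- Sign-alternation argument for odd degree (display (1.15) of the paper): let p be an odd positive integer, let f : ℝ² → ℝ be a function, and suppose there exist real constants c₁₂, c₂₃, c₃₁ such that f(γ₁₂(t)) = c₁₂ L_p(2t−1), f(γ₂₃(t)) = c₂₃ L_p(2t−1), and f(γ₃₁(t)) = c₃₁ L_p(2t−1) for all t ∈ [0,1]. Then c₁₂ = c₂₃ = c₃₁ = 0; in particular f vanishes at every point of the three closed edges of K. -/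
/-!
Since `L_p(1) = 1` and `L_p(-1) = (-1)^p = -1`, an edge carrying `c L_p(2t - 1)` forces the
value `c` at its head and `-c` at its tail. At each vertex of the triangle the incoming and the
outgoing edge meet, so `c₁₂ = -c₂₃ = c₃₁ = -c₁₂`: an odd cycle of sign changes forces all three
constants to vanish.
-/

open MeasureTheory Polynomial

/-
At `x = a` only the term of the Leibniz expansion in which all `k` derivatives fall on
`(X - a)^k` survives.
-/
theorem Polynomial.eval_iterate_derivative_X_sub_C_pow_mul_X_sub_C_pow
    {R : Type*} [CommRing R] (k : ℕ) (a b : R) :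
    (derivative^[k] ((X - C a) ^ k * (X - C b) ^ k)).eval a = k.factorial * (a - b) ^ k := by
  rw [iterate_derivative_mul, eval_finsetSum,
    Finset.sum_eq_single_of_mem 0 (Finset.mem_range.mpr k.succ_pos)]
  · simp [iterate_derivative_X_sub_pow_self]
  · intro m hm hm0
    rw [iterate_derivative_X_sub_pow,
      Nat.sub_sub_self (Nat.lt_succ_iff.mp (Finset.mem_range.mp hm))]
    simp [zero_pow hm0]

theorem legendre_eq_smul_iterate_derivative (k : ℕ) :
    legendre k = ((2 ^ k * k.factorial : ℝ)⁻¹) •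
      derivative^[k] ((X - C 1) ^ k * (X - C (-1)) ^ k) := by
  rw [legendre, ← mul_pow]
  congr 3
  simp only [map_neg, map_one]
  ring

theorem legendre_eval_one (k : ℕ) : (legendre k).eval 1 = 1 := by
  rw [legendre_eq_smul_iterate_derivative, eval_smul,
    eval_iterate_derivative_X_sub_C_pow_mul_X_sub_C_pow, smul_eq_mul]
  norm_num
  field_simp

theorem legendre_eval_neg_one (k : ℕ) : (legendre k).eval (-1) = (-1) ^ k := by
  rw [legendre_eq_smul_iterate_derivative, mul_comm ((X - C 1) ^ k), eval_smul,
    eval_iterate_derivative_X_sub_C_pow_mul_X_sub_C_pow, smul_eq_mul,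
    show (-1 - 1 : ℝ) = -1 * 2 by norm_num, mul_pow]
  field_simp

theorem Odd.legendre_eval_neg_one {p : ℕ} (hp : Odd p) : (legendre p).eval (-1) = -1 := by
  rw [_root_.legendre_eval_neg_one, hp.neg_one_pow]

theorem endpoint_values_of_eq_legendre_on_segment {E : Type*} [AddCommGroup E] [Module ℝ E]
    {p : ℕ} (hp : Odd p) {f : E → ℝ} {A B : E} {c : ℝ}
    (h : ∀ t ∈ Set.Icc (0:ℝ) 1, f (A + t • (B - A)) = c * (legendre p).eval (2 * t - 1)) :
    f A = -c ∧ f B = c := by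
  constructor
  · simpa [hp.legendre_eval_neg_one] using h 0 (by simp)
  · have h1 := h 1 (by norm_num)
    norm_num [legendre_eval_one] at h1
    exact h1

theorem sign_alternation_odd_general (p : ℕ) (hp_odd : Odd p)
    (A₁ A₂ A₃ : Fin 2 → ℝ)
    (f : (Fin 2 → ℝ) → ℝ) (c₁₂ c₂₃ c₃₁ : ℝ)
    (h₁₂ : ∀ t ∈ Set.Icc (0:ℝ) 1,
      f (A₁ + t • (A₂ - A₁)) = c₁₂ * (legendre p).eval (2 * t - 1))
    (h₂₃ : ∀ t ∈ Set.Icc (0:ℝ) 1,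
      f (A₂ + t • (A₃ - A₂)) = c₂₃ * (legendre p).eval (2 * t - 1))
    (h₃₁ : ∀ t ∈ Set.Icc (0:ℝ) 1,
      f (A₃ + t • (A₁ - A₃)) = c₃₁ * (legendre p).eval (2 * t - 1)) :
    c₁₂ = 0 ∧ c₂₃ = 0 ∧ c₃₁ = 0 ∧
      ∀ t ∈ Set.Icc (0:ℝ) 1,
        f (A₁ + t • (A₂ - A₁)) = 0 ∧
        f (A₂ + t • (A₃ - A₂)) = 0 ∧
        f (A₃ + t • (A₁ - A₃)) = 0 := by
  obtain ⟨hA₁, hA₂⟩ := endpoint_values_of_eq_legendre_on_segment hp_odd h₁₂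
  obtain ⟨hA₂', hA₃⟩ := endpoint_values_of_eq_legendre_on_segment hp_odd h₂₃
  obtain ⟨hA₃', hA₁'⟩ := endpoint_values_of_eq_legendre_on_segment hp_odd h₃₁
  have hc₁₂ : c₁₂ = 0 := by linarith
  have hc₂₃ : c₂₃ = 0 := by linarith
  have hc₃₁ : c₃₁ = 0 := by linarith
  refine ⟨hc₁₂, hc₂₃, hc₃₁, fun t ht => ?_⟩
  simp [h₁₂ t ht, h₂₃ t ht, h₃₁ t ht, hc₁₂, hc₂₃, hc₃₁]

/-- Sign-alternation argument for odd degree: if along each (cyclically oriented) closed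
edge of the triangle a function coincides with a multiple of `L_p(2t−1)`, `p` odd, then all
three multiples vanish, and hence the function vanishes on the three closed edges. -/
theorem sign_alternation_odd (p : ℕ) (hp_pos : 0 < p) (hp_odd : Odd p)
    (A₁ A₂ A₃ : Fin 2 → ℝ) (hA : AffineIndependent ℝ ![A₁, A₂, A₃])
    (f : (Fin 2 → ℝ) → ℝ) (c₁₂ c₂₃ c₃₁ : ℝ)
    (h₁₂ : ∀ t ∈ Set.Icc (0:ℝ) 1,
      f (A₁ + t • (A₂ - A₁)) = c₁₂ * (legendre p).eval (2 * t - 1))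
    (h₂₃ : ∀ t ∈ Set.Icc (0:ℝ) 1,
      f (A₂ + t • (A₃ - A₂)) = c₂₃ * (legendre p).eval (2 * t - 1))
    (h₃₁ : ∀ t ∈ Set.Icc (0:ℝ) 1,
      f (A₃ + t • (A₁ - A₃)) = c₃₁ * (legendre p).eval (2 * t - 1)) :
    c₁₂ = 0 ∧ c₂₃ = 0 ∧ c₃₁ = 0 ∧
      ∀ t ∈ Set.Icc (0:ℝ) 1,
        f (A₁ + t • (A₂ - A₁)) = 0 ∧
        f (A₂ + t • (A₃ - A₂)) = 0 ∧
        f (A₃ + t • (A₁ - A₃)) = 0 :=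
  sign_alternation_odd_general p hp_odd A₁ A₂ A₃ f c₁₂ c₂₃ c₃₁ h₁₂ h₂₃ h₃₁
end

section
/- Sign-alternation argument for even degree (display (2.4) of the paper): let p be an even positive integer, let f : ℝ² → ℝ be a function, and suppose there exist real constants c₁₂, c₂₃, c₃₁ such that f(γ₁₂(t)) = c₁₂ L_{p−1}(2t−1), f(γ₂₃(t)) = c₂₃ L_{p−1}(2t−1), and f(γ₃₁(t)) = c₃₁ L_{p−1}(2t−1) for all t ∈ [0,1]. Then c₁₂ = c₂₃ = c₃₁ = 0; in particular f vanishes at every point of the three closed edges of K. -/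
/-!
An odd-degree Legendre polynomial takes the values `1` at `1` and `-1` at `-1`, so the edge
profile `c_{ij} L_{p-1}(2t-1)` equals `-c_{ij}` at `A_i` and `c_{ij}` at `A_j`. Comparing the two
edges through each vertex gives `c₁₂ = -c₂₃`, `c₂₃ = -c₃₁`, `c₃₁ = -c₁₂`; around a cycle of odd
length this forces every coefficient to vanish.

The values at `±1` come from Leibniz's rule applied to `(x - 1)^k (x + 1)^k`: only the term where
all `k` derivatives fall on the factor vanishing at the evaluation point survives.
-/

open MeasureTheory Polynomial

open Nat in
theorem Polynomial.eval_iterate_derivative_X_sub_C_pow_mul {R : Type*} [CommRing R]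
    (k : ℕ) (a : R) (q : R[X]) :
    (derivative^[k] ((X - C a) ^ k * q)).eval a = k ! * q.eval a := by
  rw [iterate_derivative_mul, eval_finsetSum,
    Finset.sum_eq_single_of_mem 0 (Finset.mem_range.mpr k.succ_pos)]
  · simp [iterate_derivative_X_sub_pow_self]
  · intro j hjk hj
    have : k - (k - j) ≠ 0 := by rw [Finset.mem_range] at hjk; omega
    simp [iterate_derivative_X_sub_pow, this]

theorem endpoint_values_of_eq_legendre_odd {E : Type*} [AddCommGroup E] [Module ℝ E]
    {f : E → ℝ} {k : ℕ} (hk : Odd k) {c : ℝ} {A B : E}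
    (h : ∀ t ∈ Set.Icc (0 : ℝ) 1, f (A + t • (B - A)) = c * (legendre k).eval (2 * t - 1)) :
    f A = -c ∧ f B = c := by
  constructor
  · simpa [legendre_eval_neg_one, hk.neg_one_pow] using h 0 (by simp)
  · simpa [legendre_eval_one, show (2 : ℝ) - 1 = 1 by norm_num] using h 1 (by simp)

theorem sign_alternation_even_general (p : ℕ) (hp_pos : 0 < p) (hp_even : Even p)
    (A₁ A₂ A₃ : Fin 2 → ℝ)
    (f : (Fin 2 → ℝ) → ℝ) (c₁₂ c₂₃ c₃₁ : ℝ)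
    (h₁₂ : ∀ t ∈ Set.Icc (0:ℝ) 1,
      f (A₁ + t • (A₂ - A₁)) = c₁₂ * (legendre (p - 1)).eval (2 * t - 1))
    (h₂₃ : ∀ t ∈ Set.Icc (0:ℝ) 1,
      f (A₂ + t • (A₃ - A₂)) = c₂₃ * (legendre (p - 1)).eval (2 * t - 1))
    (h₃₁ : ∀ t ∈ Set.Icc (0:ℝ) 1,
      f (A₃ + t • (A₁ - A₃)) = c₃₁ * (legendre (p - 1)).eval (2 * t - 1)) :
    c₁₂ = 0 ∧ c₂₃ = 0 ∧ c₃₁ = 0 ∧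
      ∀ t ∈ Set.Icc (0:ℝ) 1,
        f (A₁ + t • (A₂ - A₁)) = 0 ∧
        f (A₂ + t • (A₃ - A₂)) = 0 ∧
        f (A₃ + t • (A₁ - A₃)) = 0 := by
  have hodd : Odd (p - 1) := Nat.Even.sub_odd hp_pos hp_even odd_one
  obtain ⟨hA₁, hA₂⟩ := endpoint_values_of_eq_legendre_odd hodd h₁₂
  obtain ⟨hA₂', hA₃⟩ := endpoint_values_of_eq_legendre_odd hodd h₂₃
  obtain ⟨hA₃', hA₁'⟩ := endpoint_values_of_eq_legendre_odd hodd h₃₁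
  have h12 : c₁₂ = 0 := by linarith
  have h23 : c₂₃ = 0 := by linarith
  have h31 : c₃₁ = 0 := by linarith
  refine ⟨h12, h23, h31, fun t ht => ⟨?_, ?_, ?_⟩⟩
  · simp [h₁₂ t ht, h12]
  · simp [h₂₃ t ht, h23]
  · simp [h₃₁ t ht, h31]

/-- Sign-alternation argument for odd degree: if along each (cyclically oriented) closed
edge of the triangle a function coincides with a multiple of `L_{p−1}(2t−1)`, `p` even, then all
three multiples vanish, and hence the function vanishes on the three closed edges. -/
theorem sign_alternation_even (p : ℕ) (hp_pos : 0 < p) (hp_even : Even p)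
    (A₁ A₂ A₃ : Fin 2 → ℝ) (hA : AffineIndependent ℝ ![A₁, A₂, A₃])
    (f : (Fin 2 → ℝ) → ℝ) (c₁₂ c₂₃ c₃₁ : ℝ)
    (h₁₂ : ∀ t ∈ Set.Icc (0:ℝ) 1,
      f (A₁ + t • (A₂ - A₁)) = c₁₂ * (legendre (p - 1)).eval (2 * t - 1))
    (h₂₃ : ∀ t ∈ Set.Icc (0:ℝ) 1,
      f (A₂ + t • (A₃ - A₂)) = c₂₃ * (legendre (p - 1)).eval (2 * t - 1))
    (h₃₁ : ∀ t ∈ Set.Icc (0:ℝ) 1,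
      f (A₃ + t • (A₁ - A₃)) = c₃₁ * (legendre (p - 1)).eval (2 * t - 1)) :
    c₁₂ = 0 ∧ c₂₃ = 0 ∧ c₃₁ = 0 ∧
      ∀ t ∈ Set.Icc (0:ℝ) 1,
        f (A₁ + t • (A₂ - A₁)) = 0 ∧
        f (A₂ + t • (A₃ - A₂)) = 0 ∧
        f (A₃ + t • (A₁ - A₃)) = 0 :=
  sign_alternation_even_general p hp_pos hp_even A₁ A₂ A₃ f c₁₂ c₂₃ c₃₁ h₁₂ h₂₃ h₃₁
end

section
/- Divisibility by the product of barycentric coordinates: let p ≥ 3 be an integer and let v : ℝ² → ℝ be a polynomial of total degree at most p that vanishes at every point of each of the three closed edges of the triangle K (i.e., v(γ_{ij}(t)) = 0 for all i ≠ j and t ∈ [0,1]). Then there exists a polynomial q : ℝ² → ℝ of total degree at most p−3 such that v = λ₁ λ₂ λ₃ q. -/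
/-!
Each barycentric coordinate `λᵢ` is a polynomial of degree one, hence a prime of the factorial
ring `ℝ[x, y]`, and its zero set is the line through the edge opposite to `Aᵢ`. A polynomial
vanishing on a segment vanishes on the whole line (its restriction is a univariate polynomial
with infinitely many roots), and a polynomial vanishing on the zero set of an affine function `ℓ`
is divisible by `ℓ`: substituting the projection onto `{ℓ = 0}` kills it, while that substitution
is the identity modulo `ℓ`. So the three pairwise non-associate primes `λᵢ` divide `v`, hence so
does their product, and degrees add in the domain `ℝ[x, y]`.
-/

theorem LinearMap.exists_apply_single_ne_zero {K ι M : Type*} [Semiring K] [AddCommMonoid M]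
    [Module K M] [Fintype ι] [DecidableEq ι] {f : (ι → K) →ₗ[K] M} (hf : f ≠ 0) :
    ∃ k, f (Pi.single k 1) ≠ 0 := by
  contrapose! hf
  exact LinearMap.pi_ext' fun k => LinearMap.ext_ring (hf k)

theorem Prime.mul_dvd_of_dvd_of_not_dvd {α : Type*} [CommMonoidWithZero α] {p a b : α}
    (hp : Prime p) (hpa : ¬p ∣ a) (ha : a ∣ b) (hpb : p ∣ b) : a * p ∣ b := by
  obtain ⟨c, rfl⟩ := ha
  exact mul_dvd_mul_left a ((hp.dvd_or_dvd hpb).resolve_left hpa)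

theorem AffineBasis.lineMap_coord_eq_of_coord_eq_zero {k V : Type*} [CommRing k]
    [AddCommGroup V] [Module k V] (b : AffineBasis (Fin 3) k V) {i : Fin 3} {x : V}
    (hx : b.coord i x = 0) :
    AffineMap.lineMap (b (i + 1)) (b (i + 2)) (b.coord (i + 2) x) = x := by
  have hsum := b.sum_coord_apply_eq_one x
  have hcomb := b.linear_combination_coord_eq_self x
  rw [Fin.sum_univ_three] at hsum hcomb
  rw [AffineMap.lineMap_apply_module]
  fin_cases i <;>
    simp only [Fin.zero_eta, Fin.mk_one, Fin.reduceFinMk, Fin.isValue, zero_add,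
      Fin.reduceAdd] at hx ⊢ <;>
    rw [hx] at hsum hcomb
  · linear_combination (norm := module) hcomb - hsum • b 1
  · linear_combination (norm := module) hcomb - hsum • b 2
  · linear_combination (norm := module) hcomb - hsum • b 0

theorem AffineBasis.eq_coord_of_apply_eq {ι k V P : Type*} [Ring k] [AddCommGroup V] [Module k V]
    [AddTorsor V P] [DecidableEq ι] (b : AffineBasis ι k P) {f : P →ᵃ[k] k} {i : ι}
    (hf : ∀ j, f (b j) = if i = j then 1 else 0) : f = b.coord i :=
  AffineMap.ext_on b.tot (by
    rintro - ⟨j, rfl⟩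
    exact (hf j).trans (b.coord_apply i j).symm)

namespace MvPolynomial

variable {K ι : Type*}

theorem dvd_sub_bind₁ [CommRing K] {a : MvPolynomial ι K} {g : ι → MvPolynomial ι K}
    (hg : ∀ i, a ∣ X i - g i) (p : MvPolynomial ι K) : a ∣ p - bind₁ g p := by
  have hmk : (Ideal.Quotient.mkₐ K (Ideal.span {a})).comp (bind₁ g) =
      Ideal.Quotient.mkₐ K (Ideal.span {a}) := by
    ext i
    simpa [Ideal.Quotient.eq, Ideal.mem_span_singleton, dvd_sub_comm] using hg i
  rw [← Ideal.mem_span_singleton, ← Ideal.Quotient.eq]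
  exact (AlgHom.congr_fun hmk p).symm

theorem totalDegree_le_sub_of_mul_eq [CommRing K] [IsDomain K] {a q v : MvPolynomial ι K}
    (ha : a ≠ 0) (hv : v = a * q) {n : ℕ} (hn : v.totalDegree ≤ n) :
    q.totalDegree ≤ n - a.totalDegree := by
  rcases eq_or_ne q 0 with rfl | hq
  · simp
  · rw [hv, totalDegree_mul_of_isDomain ha hq] at hn
    omega

theorem eval_affineMap_eq_zero_of_infinite [Field K] {p : MvPolynomial ι K}
    (f : K →ᵃ[K] (ι → K)) (h : {t | eval (f t) p = 0}.Infinite) (t : K) :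
    eval (f t) p = 0 := by
  set u : Polynomial K :=
    aeval (fun i => Polynomial.C (f 0 i) + Polynomial.X * Polynomial.C (f.linear 1 i)) p
  have hu : ∀ t, u.eval t = eval (f t) p := by
    intro t
    rw [← Polynomial.coe_aeval_eq_eval, comp_aeval_apply, aeval_eq_eval]
    refine congrArg (eval · p) ?_
    have hf : f t = t • f.linear 1 + f 0 := by
      rw [← map_smul, smul_eq_mul, mul_one]
      simpa using f.map_vadd 0 t
    funext i
    simp only [hf, map_add, map_mul, Polynomial.aeval_C, Polynomial.aeval_X, Pi.add_apply,
      Pi.smul_apply, smul_eq_mul, Algebra.algebraMap_self, RingHom.id_apply]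
    ring
  have hu0 : u = 0 :=
    Polynomial.eq_zero_of_infinite_isRoot u (by simpa [Polynomial.IsRoot, hu] using h)
  rw [← hu, hu0, Polynomial.eval_zero]

theorem eval_eq_zero_of_coord_eq_zero [Field K] [LinearOrder K] [IsStrictOrderedRing K]
    (b : AffineBasis (Fin 3) K (ι → K)) {p : MvPolynomial ι K}
    (hp : ∀ i j, i ≠ j → ∀ t ∈ Set.Icc (0 : K) 1, eval (AffineMap.lineMap (b i) (b j) t) p = 0)
    {i : Fin 3} {x : ι → K} (hx : b.coord i x = 0) : eval x p = 0 := by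
  rw [← b.lineMap_coord_eq_of_coord_eq_zero hx]
  exact eval_affineMap_eq_zero_of_infinite _
    ((Set.Icc_infinite zero_lt_one).mono (hp _ _ (by simp))) _

variable [Fintype ι] [DecidableEq ι]

noncomputable def ofAffineMap [CommRing K] (ℓ : (ι → K) →ᵃ[K] K) : MvPolynomial ι K :=
  C (ℓ 0) + ∑ i, C (ℓ.linear (Pi.single i 1)) * X i

section CommRing

variable [CommRing K]

@[simp]
theorem eval_ofAffineMap (ℓ : (ι → K) →ᵃ[K] K) (x : ι → K) : eval x (ofAffineMap ℓ) = ℓ x := by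
  have hx : x = ∑ i, x i • Pi.single i (1 : K) := by
    ext j
    simp [Finset.sum_apply, Pi.single_apply]
  conv_rhs => rw [ℓ.decomp, hx]
  simp [ofAffineMap, map_sum, mul_comm, add_comm]

theorem totalDegree_ofAffineMap_le (ℓ : (ι → K) →ᵃ[K] K) : (ofAffineMap ℓ).totalDegree ≤ 1 := by
  refine (totalDegree_add _ _).trans (max_le (by simp) ?_)
  refine (totalDegree_finsetSum _ _).trans (Finset.sup_le fun i _ => ?_)
  rw [C_mul_X_eq_monomial]
  exact (totalDegree_monomial_le _ _).trans (by simp)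

end CommRing

section Field

variable [Field K] {ℓ : (ι → K) →ᵃ[K] K}

theorem totalDegree_ofAffineMap (hℓ : ℓ.linear ≠ 0) : (ofAffineMap ℓ).totalDegree = 1 := by
  refine le_antisymm (totalDegree_ofAffineMap_le ℓ) (Nat.one_le_iff_ne_zero.mpr fun h0 => hℓ ?_)
  rw [totalDegree_eq_zero_iff_eq_C] at h0
  have hconst : ∀ x, ℓ x = ℓ 0 := fun x => by
    rw [← eval_ofAffineMap, ← eval_ofAffineMap ℓ 0, h0, eval_C, eval_C]
  ext v
  simp [ℓ.decomp', hconst]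

theorem prime_ofAffineMap (hℓ : ℓ.linear ≠ 0) : Prime (ofAffineMap ℓ) := by
  have hdeg := totalDegree_ofAffineMap hℓ
  refine (irreducible_of_totalDegree_eq_one hdeg fun a ha => ?_).prime
  obtain ⟨d, hd⟩ := exists_coeff_ne_zero (p := ofAffineMap ℓ) (by rintro h; simp [h] at hdeg)
  exact isUnit_iff_ne_zero.mpr fun h0 => hd (zero_dvd_iff.mp (h0 ▸ ha d))

theorem ofAffineMap_dvd_of_eval_eq_zero [Infinite K] (hℓ : ℓ.linear ≠ 0) {p : MvPolynomial ι K}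
    (hp : ∀ x, ℓ x = 0 → eval x p = 0) : ofAffineMap ℓ ∣ p := by
  obtain ⟨k, hk⟩ := LinearMap.exists_apply_single_ne_zero hℓ
  set c := ℓ.linear (Pi.single k 1)
  set e : ι → K := c⁻¹ • Pi.single k 1
  set g : ι → MvPolynomial ι K := fun j => X j - C (e j) * ofAffineMap ℓ
  have hproj : ∀ x, ℓ (fun j => eval x (g j)) = 0 := by
    intro x
    have he : ℓ.linear e = 1 := by
      rw [map_smul, smul_eq_mul, inv_mul_cancel₀ hk]
    have hx : (fun j => eval x (g j)) = -(ℓ x • e) +ᵥ x := by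
      funext j
      simp [g, mul_comm, sub_eq_neg_add]
    rw [hx, ℓ.map_vadd, map_neg, map_smul, he, smul_eq_mul, mul_one, vadd_eq_add, neg_add_cancel]
  have hg : bind₁ g p = 0 := MvPolynomial.funext fun x => by
    rw [eval, eval₂Hom_bind₁]
    simpa using hp _ (hproj x)
  simpa [hg] using dvd_sub_bind₁ (a := ofAffineMap ℓ) (g := g)
    (fun j => ⟨C (e j), by simp only [g]; ring⟩) p

end Field

end MvPolynomial

open MvPolynomial

theorem divisible_by_barycentric_product_general (p : ℕ)
    (A : Fin 3 → (Fin 2 → ℝ)) (hA : AffineIndependent ℝ A)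
    (lam : Fin 3 → ((Fin 2 → ℝ) →ᵃ[ℝ] ℝ))
    (hlam : ∀ i j : Fin 3, lam i (A j) = if i = j then 1 else 0)
    (v : MvPolynomial (Fin 2) ℝ) (hv : v.totalDegree ≤ p)
    (hedge : ∀ i j : Fin 3, i ≠ j → ∀ t ∈ Set.Icc (0:ℝ) 1,
      MvPolynomial.eval (edgeParam A i j t) v = 0) :
    ∃ q : MvPolynomial (Fin 2) ℝ, q.totalDegree ≤ p - 3 ∧
      ∀ x : Fin 2 → ℝ,
        MvPolynomial.eval x v =
          lam 0 x * lam 1 x * lam 2 x * MvPolynomial.eval x q := by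
  let b : AffineBasis (Fin 3) ℝ (Fin 2 → ℝ) :=
    ⟨A, hA, hA.affineSpan_eq_top_iff_card_eq_finrank_add_one.mpr (by simp)⟩
  have hb : ⇑b = A := rfl
  have hlinear : ∀ i, (lam i).linear ≠ 0 := fun i h => by
    simpa [h, hlam] using (lam i).linearMap_vsub (A i) (A (i + 1))
  have hdvd : ∀ i, ofAffineMap (lam i) ∣ v := fun i =>
    ofAffineMap_dvd_of_eval_eq_zero (hlinear i) fun x hx =>
      eval_eq_zero_of_coord_eq_zero b
        (fun j k hjk t ht => by
          simpa [hb, edgeParam, AffineMap.lineMap_apply_module', add_comm] using hedge j k hjk t ht)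
        (b.eq_coord_of_apply_eq (hlam i) ▸ hx)
  have hprime : ∀ i, Prime (ofAffineMap (lam i)) := fun i => prime_ofAffineMap (hlinear i)
  have hndvd : ∀ i j, i ≠ j → ¬ofAffineMap (lam i) ∣ ofAffineMap (lam j) := fun i j hij h => by
    simpa [hlam, hij] using _root_.map_dvd (eval (A j)) h
  obtain ⟨q, hq⟩ : ofAffineMap (lam 0) * ofAffineMap (lam 1) * ofAffineMap (lam 2) ∣ v := by
    refine (hprime 2).mul_dvd_of_dvd_of_not_dvd ?_ ?_ (hdvd 2)
    · exact fun h => ((hprime 2).dvd_or_dvd h).elim (hndvd 2 0 (by decide)) (hndvd 2 1 (by decide))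
    · exact (hprime 1).mul_dvd_of_dvd_of_not_dvd (hndvd 1 0 (by decide)) (hdvd 0) (hdvd 1)
  refine ⟨q, ?_, fun x => by simp [hq]⟩
  have hdeg :
      (ofAffineMap (lam 0) * ofAffineMap (lam 1) * ofAffineMap (lam 2)).totalDegree = 3 := by
    simp only [totalDegree_mul_of_isDomain, mul_ne_zero, (hprime _).ne_zero, ne_eq,
      not_false_eq_true, totalDegree_ofAffineMap (hlinear _)]
  simpa [hdeg] using totalDegree_le_sub_of_mul_eq
    (mul_ne_zero (mul_ne_zero (hprime 0).ne_zero (hprime 1).ne_zero) (hprime 2).ne_zero) hq hv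

/-- A bivariate polynomial of total degree at most `p ≥ 3` vanishing on the three closed
edges of a triangle is the product of the three barycentric coordinates with a polynomial
of total degree at most `p − 3`. -/
theorem divisible_by_barycentric_product (p : ℕ) (hp : 3 ≤ p)
    (A : Fin 3 → (Fin 2 → ℝ)) (hA : AffineIndependent ℝ A)
    (lam : Fin 3 → ((Fin 2 → ℝ) →ᵃ[ℝ] ℝ))
    (hlam : ∀ i j : Fin 3, lam i (A j) = if i = j then 1 else 0)
    (v : MvPolynomial (Fin 2) ℝ) (hv : v.totalDegree ≤ p)
    (hedge : ∀ i j : Fin 3, i ≠ j → ∀ t ∈ Set.Icc (0:ℝ) 1,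
      MvPolynomial.eval (edgeParam A i j t) v = 0) :
    ∃ q : MvPolynomial (Fin 2) ℝ, q.totalDegree ≤ p - 3 ∧
      ∀ x : Fin 2 → ℝ,
        MvPolynomial.eval x v =
          lam 0 x * lam 1 x * lam 2 x * MvPolynomial.eval x q :=
  divisible_by_barycentric_product_general p A hA lam hlam v hv hedge
end

section
/- Edge restriction of the elemental nonconforming bubble: let p be an even positive integer, let V₁, V₂, V₃ be affinely independent points of ℝ² with barycentric coordinates λ₁, λ₂, λ₃, and define b(x) := (1/2)(−1 + L_p(1−2λ₁(x)) + L_p(1−2λ₂(x)) + L_p(1−2λ₃(x))). Then for every pair of distinct indices i, j and all t ∈ [0,1], b(V_i + t(V_j − V_i)) = L_p(2t − 1). In particular, the restriction of b to any edge of the triangle depends only on that edge (parametrized from one endpoint to the other) and not on the third vertex. -/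
/-!
At the point `V i + t • (V j - V i)` the barycentric coordinates are `1 - t`, `t` and `0`.
Rodrigues' formula gives `L_p(1) = 1` (only the term where all derivatives fall on `(x - 1)^p`
survives at `1`) and `L_p(-x) = (-1)^p L_p(x)`, so for even `p` the three terms of the bubble are
`L_p(2t - 1)`, `L_p(2t - 1)` and `1`: the `-1` cancels the third and the `1/2` the doubling.
-/

open MeasureTheory Polynomial

namespace Polynomial

variable {R : Type*} [CommRing R]

theorem eval_iterate_derivative_X_sub_C_pow_mul_s12 (n : ℕ) (a : R) (q : R[X]) :
    (derivative^[n] ((X - C a) ^ n * q)).eval a = n.factorial * q.eval a := by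
  induction n generalizing q with
  | zero => simp
  | succ n ih =>
    have hderiv : derivative ((X - C a) ^ (n + 1) * q)
        = (X - C a) ^ n * (C ((n : R) + 1) * q + (X - C a) * derivative q) := by
      rw [derivative_mul, derivative_X_sub_C_pow, Nat.add_sub_cancel]
      push_cast
      ring
    rw [Function.iterate_succ_apply, hderiv, ih, Nat.factorial_succ]
    simp only [eval_add, eval_mul, eval_sub, eval_X, eval_C, sub_self, zero_mul, add_zero,
      Nat.cast_mul, Nat.cast_succ]
    ring

@[simp]
theorem iterate_derivative_comp_neg_X (p : R[X]) (k : ℕ) :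
    derivative^[k] (p.comp (-X)) = (-1) ^ k * (derivative^[k] p).comp (-X) := by
  induction k generalizing p with
  | zero => simp
  | succ k ih => simp [ih (derivative p), derivative_comp, pow_succ]

end Polynomial

theorem legendre_eval_neg (k : ℕ) (x : ℝ) :
    (legendre k).eval (-x) = (-1) ^ k * (legendre k).eval x := by
  have hsymm : (((X : ℝ[X]) ^ 2 - 1) ^ k).comp (-X) = (X ^ 2 - 1) ^ k := by
    simp
  have := congrArg (eval (-x)) (iterate_derivative_comp_neg_X (((X : ℝ[X]) ^ 2 - 1) ^ k) k)
  rw [hsymm] at this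
  simp only [legendre, eval_smul, this, eval_mul, eval_pow, eval_neg, eval_one, eval_comp, eval_X,
    neg_neg, smul_eq_mul]
  ring

theorem sum_legendre_eval_one_sub_two_mul_of_edge {ι : Type*} [Fintype ι] {k : ℕ} (hk : Even k)
    {i j : ι} (hij : i ≠ j) {c : ι → ℝ} {t : ℝ} (hi : c i = 1 - t) (hj : c j = t)
    (hoff : ∀ m, m ≠ i → m ≠ j → c m = 0) :
    ∑ m, (legendre k).eval (1 - 2 * c m)
      = 2 * (legendre k).eval (2 * t - 1) + (Fintype.card ι - 2) := by
  have hsym : (legendre k).eval (1 - 2 * t) = (legendre k).eval (2 * t - 1) := by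
    rw [show 1 - 2 * t = -(2 * t - 1) by ring, legendre_eval_neg, hk.neg_one_pow, one_mul]
  have hexcess : ∑ m, ((legendre k).eval (1 - 2 * c m) - 1)
      = 2 * ((legendre k).eval (2 * t - 1) - 1) := by
    rw [Fintype.sum_eq_add i j hij fun m ⟨hmi, hmj⟩ => by simp [hoff m hmi hmj, legendre_eval_one],
      hi, hj, show 1 - 2 * (1 - t) = 2 * t - 1 by ring, hsym]
    ring
  rw [Finset.sum_sub_distrib] at hexcess
  simp only [Finset.sum_const, Finset.card_univ, nsmul_eq_mul, mul_one] at hexcess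
  linarith

theorem elemental_bubble_edge_restriction_general (p : ℕ) (hp_even : Even p)
    (V : Fin 3 → (Fin 2 → ℝ))
    (lam : Fin 3 → ((Fin 2 → ℝ) →ᵃ[ℝ] ℝ))
    (hlam : ∀ i j : Fin 3, lam i (V j) = if i = j then 1 else 0)
    (b : (Fin 2 → ℝ) → ℝ)
    (hb : ∀ x : Fin 2 → ℝ, b x = (1 / 2 : ℝ) *
      (-1 + (legendre p).eval (1 - 2 * lam 0 x) + (legendre p).eval (1 - 2 * lam 1 x) +
        (legendre p).eval (1 - 2 * lam 2 x))) :
    ∀ i j : Fin 3, i ≠ j → ∀ t ∈ Set.Icc (0:ℝ) 1,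
      b (V i + t • (V j - V i)) = (legendre p).eval (2 * t - 1) := by
  intro i j hij t _
  have hcoord : ∀ m, lam m (V i + t • (V j - V i))
      = AffineMap.lineMap (lam m (V i)) (lam m (V j)) t := fun m => by
    rw [← AffineMap.apply_lineMap, AffineMap.lineMap_apply_module', add_comm]
  have hsum := sum_legendre_eval_one_sub_two_mul_of_edge hp_even hij
    (c := fun m => lam m (V i + t • (V j - V i))) (t := t)
    (by simp [hcoord, hlam, hij, AffineMap.lineMap_apply_module])
    (by simp [hcoord, hlam, hij.symm, AffineMap.lineMap_apply_module])
    (fun m hmi hmj => by simp [hcoord, hlam, hmi, hmj])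
  rw [Fin.sum_univ_three, Fintype.card_fin, Nat.cast_ofNat] at hsum
  rw [hb]
  linarith

/-- Edge restriction of the elemental nonconforming bubble: for even `p`, the bubble
`b = (1/2)(−1 + Σᵢ L_p(1−2λᵢ))` restricts on each oriented edge to `L_p(2t−1)`. -/
theorem elemental_bubble_edge_restriction (p : ℕ) (hp_pos : 0 < p) (hp_even : Even p)
    (V : Fin 3 → (Fin 2 → ℝ)) (hV : AffineIndependent ℝ V)
    (lam : Fin 3 → ((Fin 2 → ℝ) →ᵃ[ℝ] ℝ))
    (hlam : ∀ i j : Fin 3, lam i (V j) = if i = j then 1 else 0)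
    (b : (Fin 2 → ℝ) → ℝ)
    (hb : ∀ x : Fin 2 → ℝ, b x = (1 / 2 : ℝ) *
      (-1 + (legendre p).eval (1 - 2 * lam 0 x) + (legendre p).eval (1 - 2 * lam 1 x) +
        (legendre p).eval (1 - 2 * lam 2 x))) :
    ∀ i j : Fin 3, i ≠ j → ∀ t ∈ Set.Icc (0:ℝ) 1,
      b (V i + t • (V j - V i)) = (legendre p).eval (2 * t - 1) :=
  elemental_bubble_edge_restriction_general p hp_even V lam hlam b hb
end

section
/- Elemental bubbles of neighbouring triangles have the same restriction on the shared edge (display (1.22) of the paper): let p be an even positive integer, let B, C ∈ ℝ², and let A₁, A₂ ∈ ℝ² be such that both triples (A₁, B, C) and (A₂, B, C) are affinely independent. For m ∈ {1,2}, let λ₁^{(m)}, λ₂^{(m)}, λ₃^{(m)} be the barycentric coordinates of the triangle with vertices A_m, B, C, and define b_m(x) := (1/2)(−1 + L_p(1−2λ₁^{(m)}(x)) + L_p(1−2λ₂^{(m)}(x)) + L_p(1−2λ₃^{(m)}(x))). Then b₁(B + t(C−B)) = b₂(B + t(C−B)) for every t ∈ [0,1]. -/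
open MeasureTheory Polynomial

/-! Each barycentric coordinate is affine, so on the edge `BC` it is determined by its values at
`B` and `C`, which are the same (`0` or `1`) for both triangles. Hence the two triangles have the
same barycentric coordinates on the edge, and the bubbles, being the same function of them, agree
there. -/

theorem AffineMap.apply_lineMap_congr {k V₁ P₁ V₂ P₂ : Type*} [Ring k]
    [AddCommGroup V₁] [Module k V₁] [AddTorsor V₁ P₁]
    [AddCommGroup V₂] [Module k V₂] [AddTorsor V₂ P₂]
    {f g : P₁ →ᵃ[k] P₂} {p₀ p₁ : P₁} (h₀ : f p₀ = g p₀) (h₁ : f p₁ = g p₁) (c : k) :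
    f (lineMap p₀ p₁ c) = g (lineMap p₀ p₁ c) := by
  rw [apply_lineMap, apply_lineMap, h₀, h₁]

theorem elemental_bubbles_agree_on_shared_edge_general (p : ℕ)
    (B C A₁ A₂ : Fin 2 → ℝ)
    (lam₁ lam₂ : Fin 3 → ((Fin 2 → ℝ) →ᵃ[ℝ] ℝ))
    (hlam₁ : ∀ i j : Fin 3, lam₁ i (![A₁, B, C] j) = if i = j then 1 else 0)
    (hlam₂ : ∀ i j : Fin 3, lam₂ i (![A₂, B, C] j) = if i = j then 1 else 0)
    (b₁ b₂ : (Fin 2 → ℝ) → ℝ)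
    (hb₁ : ∀ x : Fin 2 → ℝ, b₁ x = (1 / 2 : ℝ) *
      (-1 + (legendre p).eval (1 - 2 * lam₁ 0 x) + (legendre p).eval (1 - 2 * lam₁ 1 x) +
        (legendre p).eval (1 - 2 * lam₁ 2 x)))
    (hb₂ : ∀ x : Fin 2 → ℝ, b₂ x = (1 / 2 : ℝ) *
      (-1 + (legendre p).eval (1 - 2 * lam₂ 0 x) + (legendre p).eval (1 - 2 * lam₂ 1 x) +
        (legendre p).eval (1 - 2 * lam₂ 2 x))) :
    ∀ t ∈ Set.Icc (0:ℝ) 1, b₁ (B + t • (C - B)) = b₂ (B + t • (C - B)) := by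
  intro t _
  have hedge : B + t • (C - B) = AffineMap.lineMap B C t := by
    rw [AffineMap.lineMap_apply_module', add_comm]
  have hlam : ∀ i, lam₁ i (B + t • (C - B)) = lam₂ i (B + t • (C - B)) := fun i => by
    rw [hedge]
    exact AffineMap.apply_lineMap_congr ((hlam₁ i 1).trans (hlam₂ i 1).symm)
      ((hlam₁ i 2).trans (hlam₂ i 2).symm) t
  rw [hb₁, hb₂, hlam 0, hlam 1, hlam 2]

/-- Elemental nonconforming bubbles of two neighbouring triangles sharing the edge from `B`
to `C` have the same restriction on that shared edge. -/
theorem elemental_bubbles_agree_on_shared_edge (p : ℕ) (hp_pos : 0 < p) (hp_even : Even p)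
    (B C A₁ A₂ : Fin 2 → ℝ)
    (h₁ : AffineIndependent ℝ ![A₁, B, C]) (h₂ : AffineIndependent ℝ ![A₂, B, C])
    (lam₁ lam₂ : Fin 3 → ((Fin 2 → ℝ) →ᵃ[ℝ] ℝ))
    (hlam₁ : ∀ i j : Fin 3, lam₁ i (![A₁, B, C] j) = if i = j then 1 else 0)
    (hlam₂ : ∀ i j : Fin 3, lam₂ i (![A₂, B, C] j) = if i = j then 1 else 0)
    (b₁ b₂ : (Fin 2 → ℝ) → ℝ)
    (hb₁ : ∀ x : Fin 2 → ℝ, b₁ x = (1 / 2 : ℝ) *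
      (-1 + (legendre p).eval (1 - 2 * lam₁ 0 x) + (legendre p).eval (1 - 2 * lam₁ 1 x) +
        (legendre p).eval (1 - 2 * lam₁ 2 x)))
    (hb₂ : ∀ x : Fin 2 → ℝ, b₂ x = (1 / 2 : ℝ) *
      (-1 + (legendre p).eval (1 - 2 * lam₂ 0 x) + (legendre p).eval (1 - 2 * lam₂ 1 x) +
        (legendre p).eval (1 - 2 * lam₂ 2 x))) :
    ∀ t ∈ Set.Icc (0:ℝ) 1, b₁ (B + t • (C - B)) = b₂ (B + t • (C - B)) :=
  elemental_bubbles_agree_on_shared_edge_general p B C A₁ A₂ lam₁ lam₂ hlam₁ hlam₂ b₁ b₂ hb₁ hb₂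
end
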